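/- Let φ be a finite potent endomorphism of a k-vector space V and suppose δ ∈ End_k(V) satisfies δ∘(1+φ) = id_V = (1+φ)∘δ. Then ψ := δ − 1 is a finite potent endomorphism of V; moreover ψ = −φ∘δ = −δ∘φ and, if φ^n(V) ⊆ W with W finite-dimensional, then ψ^n(V) ⊆ δ^n(W). -/

import Mathlib

/-! Since `δ` inverts `1 + φ` on both sides, `δ - 1 = -δφ = -φδ`; in particular `δ` and `φ`
commute, so `(δ - 1)^n = ±δ^n φ^n` and `(δ - 1)^n(V) = δ^n(φ^n(V))`, which is
finite-dimensional whenever `φ^n(V)` is. -/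

/-- An endomorphism `φ` of a `k`-vector space `V` is *finite potent* if `φ^n(V)` is
finite-dimensional for some `n ≥ 1`. -/
def IsFinitePotent {k V : Type*} [Field k] [AddCommGroup V] [Module k V]
    (φ : V →ₗ[k] V) : Prop :=
  ∃ n : ℕ, 1 ≤ n ∧ FiniteDimensional k (LinearMap.range (φ ^ n))

section Ring

variable {R : Type*} [Ring R] {a b : R}

theorem sub_one_eq_neg_mul_of_mul_one_add_eq_one (h : a * (1 + b) = 1) : a - 1 = -(a * b) := by
  rw [← h, mul_add, mul_one]; abel

theorem sub_one_eq_neg_mul_of_one_add_mul_eq_one (h : (1 + b) * a = 1) : a - 1 = -(b * a) := by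
  rw [← h, add_mul, one_mul]; abel

end Ring

namespace LinearMap

variable {R M : Type*} [CommRing R] [AddCommGroup M] [Module R M]

theorem range_neg_pow (f : Module.End R M) (n : ℕ) : range ((-f) ^ n) = range (f ^ n) := by
  rcases neg_one_pow_eq_or (Module.End R M) n with h | h <;>
    simp only [neg_pow f n, h, one_mul, neg_one_mul, range_neg]

theorem range_neg_mul_pow_of_commute {f g : Module.End R M} (hfg : Commute f g) (n : ℕ) :
    range ((-(f * g)) ^ n) = (range (g ^ n)).map (f ^ n) := by
  rw [range_neg_pow, hfg.mul_pow, Module.End.mul_eq_comp, range_comp]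

end LinearMap

theorem isFinitePotent_inverse_sub_one
    {k V : Type*} [Field k] [AddCommGroup V] [Module k V]
    (φ δ : V →ₗ[k] V) (hφ : IsFinitePotent φ)
    (hδl : δ * (1 + φ) = 1) (hδr : (1 + φ) * δ = 1) :
    IsFinitePotent (δ - 1) ∧
    δ - 1 = -(φ * δ) ∧ δ - 1 = -(δ * φ) ∧
    ∀ (n : ℕ) (W : Submodule k V), FiniteDimensional k W →
      LinearMap.range (φ ^ n) ≤ W →
      LinearMap.range ((δ - 1) ^ n) ≤ Submodule.map (δ ^ n) W := by
  have hright := sub_one_eq_neg_mul_of_one_add_mul_eq_one hδr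
  have hleft := sub_one_eq_neg_mul_of_mul_one_add_eq_one hδl
  have hcomm : Commute δ φ := (neg_injective (hright.symm.trans hleft)).symm
  have hrange (n : ℕ) :
      LinearMap.range ((δ - 1) ^ n) = (LinearMap.range (φ ^ n)).map (δ ^ n) := by
    rw [hleft, LinearMap.range_neg_mul_pow_of_commute hcomm]
  refine ⟨?_, hright, hleft, fun n W _ hW => (hrange n).le.trans (Submodule.map_mono hW)⟩
  obtain ⟨n, hn, hfin⟩ := hφ
  exact ⟨n, hn, hrange n ▸ inferInstance⟩
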